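/- arXiv:1601.08130 — 4 statements merged into one kernel-verified Lean document; each statement's English description precedes it below -/
import Mathlib

section
/- Let G be a finite connected simple graph with minimal degree at least 2 that is not a cycle graph, and let e be an edge of G such that G - e is connected. Then there is a cycle of G containing e whose length is strictly less than the number of edges of G. -/
/-!
Since `G - e` is connected, `e` is not a bridge, so it lies on a cycle. A cycle has exactly two
edges at each of its vertices, so a cycle containing every edge of `G` forces all degrees to be
at most `2`. As `G` is not a cycle graph and has minimal degree `2`, some vertex has degree at
least `3`, and the cycle through `e` misses an edge of `G`.
-/

namespace SimpleGraph.Walk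

variable {V : Type*} {G : SimpleGraph V} {u : V} {c : G.Walk u u}

lemma IsCycle.degree_le_two_of_edgeSet_subset (hc : c.IsCycle)
    (hG : G.edgeSet ⊆ {e | e ∈ c.edges}) (w : V) [Fintype (G.neighborSet w)] :
    G.degree w ≤ 2 := by
  have hsub : G.neighborSet w ⊆ c.toSubgraph.neighborSet w := fun _ hx ↦
    adj_toSubgraph_iff_mem_edges.mpr (hG hx)
  rw [← card_neighborSet_eq_degree, ← Nat.card_eq_fintype_card, Nat.card_coe_set_eq]
  by_cases hw : w ∈ c.support
  · have htwo := hc.ncard_neighborSet_toSubgraph_eq_two hw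
    exact htwo ▸ Set.ncard_le_ncard hsub (Set.finite_of_ncard_ne_zero (by omega))
  · have hempty : G.neighborSet w = ∅ := Set.eq_empty_of_forall_notMem fun x hx ↦
      hw (c.fst_mem_support_of_mem_edges (hG hx))
    simp [hempty]

lemma IsCycle.length_lt_card_edgeFinset [Fintype G.edgeSet] (hc : c.IsCycle) {w : V}
    [Fintype (G.neighborSet w)] (hw : 2 < G.degree w) : c.length < G.edgeFinset.card := by
  classical
  have hsub : c.edges.toFinset ⊆ G.edgeFinset := fun e he ↦
    mem_edgeFinset.mpr (c.edges_subset_edgeSet (List.mem_toFinset.mp he))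
  have hne : c.edges.toFinset ≠ G.edgeFinset := fun heq ↦
    hw.not_ge <| hc.degree_le_two_of_edgeSet_subset (fun e he ↦
      List.mem_toFinset.mp (heq ▸ mem_edgeFinset.mpr he : e ∈ c.edges.toFinset)) w
  calc c.length = c.edges.toFinset.card := by
        rw [List.toFinset_card_of_nodup hc.edges_nodup, length_edges]
    _ < G.edgeFinset.card := Finset.card_lt_card (Finset.ssubset_iff_subset_ne.mpr ⟨hsub, hne⟩)

end SimpleGraph.Walk

open SimpleGraph in
/-- a finite connected simple graph `G` with minimal degree at least 2 that is
not a cycle graph (i.e. not connected 2-regular), with an edge `e` such that `G - e` is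
connected, has a cycle through `e` of length strictly smaller than the number of edges. -/
theorem exists_short_cycle_through_edge {V : Type*} [Fintype V] [DecidableEq V]
    (G : SimpleGraph V) [DecidableRel G.Adj]
    (hconn : G.Connected) (hdeg : ∀ v, 2 ≤ G.degree v)
    (hnotcycle : ¬ (G.Connected ∧ G.IsRegularOfDegree 2))
    (e : Sym2 V) (he : e ∈ G.edgeSet)
    (hdel : (G.deleteEdges {e}).Connected) :
    ∃ (v : V) (c : G.Walk v v), c.IsCycle ∧ e ∈ c.edges ∧ c.length < G.edgeFinset.card := by
  obtain ⟨a, b⟩ := e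
  obtain ⟨v, c, hc, hec⟩ :=
    adj_and_reachable_delete_edges_iff_exists_cycle.mp ⟨he, hdel.preconnected a b⟩
  obtain ⟨w, hw⟩ : ∃ w, G.degree w ≠ 2 := by
    simpa [IsRegularOfDegree] using fun hreg ↦ hnotcycle ⟨hconn, hreg⟩
  exact ⟨v, c, hc, hec, hc.length_lt_card_edgeFinset (w := w) (by have := hdeg w; omega)⟩
end

section
/- Let G and G′ be finite connected simple graphs, each with minimal degree at least 2, neither of which is a cycle graph, and suppose that for every edge f of G the graph G - f is connected and for every edge f′ of G′ the graph G′ - f′ is connected. Suppose G and G′ have the same edge deck, witnessed by a bijection σ : E(G) → E(G′) with G - f isomorphic to G′ - σ(f) for every edge f of G. Then for every edge e of G, the minimal length of a cycle of G containing e equals the minimal length of a cycle of G′ containing σ(e). -/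
/-!
Kelly's lemma for cycles. Summing the number of `n`-cycles of `G - f` over all edges `f` counts
every `n`-cycle of `G` once for each of the `|E| - n` edges it avoids, so for `n < |E|` the edge
deck determines the number of `n`-cycles of `G`; subtracting the `n`-cycles of `G - e` then leaves
the number of `n`-cycles through `e`. For `n ≥ |E|` neither graph has an `n`-cycle: minimal degree
`2` without being `2`-regular forces `|E| > |V|`, while a cycle has at most `|V|` edges.
-/

namespace SimpleGraph

variable {V W : Type*}

/-- An `n`-cycle occurs here `2n` times (base point and orientation); counts are only ever compared
at equal `n`, so the factor is harmless. -/
def cycleWalks (G : SimpleGraph V) (n : ℕ) : Set (Σ v, G.Walk v v) :=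
  {p | p.2.IsCycle ∧ p.2.length = n}

theorem finite_cycleWalks [Finite V] (G : SimpleGraph V) (n : ℕ) : (G.cycleWalks n).Finite := by
  classical
  have := Fintype.ofFinite V
  refine (Set.finite_range fun q : Σ v, {w : G.Walk v v // w.length = n} =>
    (⟨q.1, q.2.1⟩ : Σ v, G.Walk v v)).subset ?_
  rintro ⟨v, w⟩ ⟨-, hw⟩
  exact ⟨⟨v, w, hw⟩, rfl⟩

theorem ncard_cycleWalks_le_of_injective [Finite W] {A : SimpleGraph V} {B : SimpleGraph W}
    {f : A →g B} (hf : Function.Injective f) (n : ℕ) :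
    (A.cycleWalks n).ncard ≤ (B.cycleWalks n).ncard :=
  Set.ncard_le_ncard_of_injOn (Sigma.map f fun _ w => w.map f)
    (fun _ hp =>
      ⟨(Walk.isCycle_map_iff_of_injective hf).2 hp.1, (Walk.length_map _ _).trans hp.2⟩)
    (hf.sigma_map fun v => Walk.map_injective_of_injective hf v v).injOn (B.finite_cycleWalks n)

theorem ncard_cycleWalks_eq_of_iso [Finite V] [Finite W] {A : SimpleGraph V} {B : SimpleGraph W}
    (φ : A ≃g B) (n : ℕ) : (A.cycleWalks n).ncard = (B.cycleWalks n).ncard :=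
  le_antisymm (ncard_cycleWalks_le_of_injective (f := φ.toHom) φ.injective n)
    (ncard_cycleWalks_le_of_injective (f := φ.symm.toHom) φ.symm.injective n)

theorem ncard_cycleWalks_deleteEdges (G : SimpleGraph V) (e : Sym2 V) (n : ℕ) :
    ((G.deleteEdges {e}).cycleWalks n).ncard = {p ∈ G.cycleWalks n | e ∉ p.2.edges}.ncard := by
  have hle := G.deleteEdges_le {e}
  have himage : Sigma.map id (fun _ q => q.mapLe hle) '' (G.deleteEdges {e}).cycleWalks n =
      {p ∈ G.cycleWalks n | e ∉ p.2.edges} := by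
    ext ⟨v, p⟩
    constructor
    · rintro ⟨⟨u, q⟩, ⟨hcyc, hlen⟩, hqp⟩
      cases hqp
      refine ⟨⟨hcyc.mapLe hle, by simpa using hlen⟩, fun he => ?_⟩
      rw [Walk.edges_mapLe_eq_edges] at he
      simpa using q.edges_subset_edgeSet he
    · rintro ⟨⟨hcyc, hlen⟩, he⟩
      exact ⟨⟨v, p.toDeleteEdge e he⟩, ⟨hcyc.transfer _, by simpa using hlen⟩,
        by simp only [Sigma.map, id, Walk.map_toDeleteEdges_eq]⟩
  rw [← himage, Set.ncard_image_of_injective]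
  exact Function.injective_id.sigma_map fun v => Walk.map_injective_of_injective
    Function.injective_id v v

open Finset in
theorem Walk.IsTrail.card_filter_mem_edges {G : SimpleGraph V} [Fintype G.edgeSet] {u v : V}
    {p : G.Walk u v} (hp : p.IsTrail) [DecidablePred fun f : G.edgeSet => ↑f ∈ p.edges] :
    #{f : G.edgeSet | ↑f ∈ p.edges} = p.length := by
  classical
  rw [← Walk.length_edges, ← List.toFinset_card_of_nodup hp.edges_nodup]
  refine card_nbij Subtype.val (fun f hf => by simpa using hf) Subtype.val_injective.injOn ?_
  intro e he
  simp only [coe_filter, mem_univ, true_and, Set.mem_image, Set.mem_ofPred_eq]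
  exact ⟨⟨e, p.edges_subset_edgeSet (by simpa using he)⟩, by simpa using he, rfl⟩

theorem ncard_cycleWalks_through_add_avoiding [Finite V] (G : SimpleGraph V) (e : Sym2 V)
    (n : ℕ) :
    {p ∈ G.cycleWalks n | e ∈ p.2.edges}.ncard + {p ∈ G.cycleWalks n | e ∉ p.2.edges}.ncard =
      (G.cycleWalks n).ncard :=
  Set.ncard_inter_add_ncard_sdiff_eq_ncard _ _ (G.finite_cycleWalks n)

open Finset in
theorem sum_ncard_cycleWalks_through [Finite V] (G : SimpleGraph V) [Fintype G.edgeSet] (n : ℕ) :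
    ∑ f : G.edgeSet, {p ∈ G.cycleWalks n | ↑f ∈ p.2.edges}.ncard =
      n * (G.cycleWalks n).ncard := by
  classical
  set C := (G.finite_cycleWalks n).toFinset
  let r : G.edgeSet → (Σ v, G.Walk v v) → Prop := fun f p => ↑f ∈ p.2.edges
  have hthrough (f : G.edgeSet) :
      {p ∈ G.cycleWalks n | ↑f ∈ p.2.edges}.ncard = #(C.bipartiteAbove r f) := by
    rw [← Set.ncard_coe_finset]
    congr 1
    ext p
    simp [C, r, bipartiteAbove]
  have hlength (p) (hp : p ∈ C) : #(univ.bipartiteBelow r p) = n := by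
    rw [Set.Finite.mem_toFinset] at hp
    rw [← hp.2]
    exact hp.1.isTrail.card_filter_mem_edges
  rw [sum_congr rfl fun f _ => hthrough f, sum_card_bipartiteAbove_eq_sum_card_bipartiteBelow,
    sum_congr rfl hlength, sum_const, smul_eq_mul, mul_comm,
    Set.ncard_eq_toFinset_card _ (G.finite_cycleWalks n)]

theorem sum_ncard_cycleWalks_deleteEdges [Finite V] (G : SimpleGraph V) [Fintype G.edgeSet]
    (n : ℕ) :
    n * (G.cycleWalks n).ncard + ∑ f : G.edgeSet, ((G.deleteEdges {↑f}).cycleWalks n).ncard =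
      Nat.card G.edgeSet * (G.cycleWalks n).ncard := by
  simp only [← sum_ncard_cycleWalks_through, ncard_cycleWalks_deleteEdges,
    ← Finset.sum_add_distrib, ncard_cycleWalks_through_add_avoiding, Finset.sum_const,
    Finset.card_univ, smul_eq_mul, Nat.card_eq_fintype_card]

theorem ncard_cycleWalks_eq_of_edgeDeck [Finite V] [Finite W] {G : SimpleGraph V}
    {G' : SimpleGraph W} (σ : G.edgeSet ≃ G'.edgeSet)
    (hσ : ∀ f : G.edgeSet,
      Nonempty (G.deleteEdges {(f : Sym2 V)} ≃g G'.deleteEdges {(σ f : Sym2 W)}))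
    {n : ℕ} (hn : n < Nat.card G.edgeSet) :
    (G.cycleWalks n).ncard = (G'.cycleWalks n).ncard := by
  have := Fintype.ofFinite G.edgeSet
  have := Fintype.ofFinite G'.edgeSet
  have hdeck : ∑ f : G.edgeSet, ((G.deleteEdges {↑f}).cycleWalks n).ncard =
      ∑ f' : G'.edgeSet, ((G'.deleteEdges {↑f'}).cycleWalks n).ncard := by
    rw [← σ.sum_comp]
    exact Finset.sum_congr rfl fun f _ => ncard_cycleWalks_eq_of_iso (hσ f).some n
  have hG := G.sum_ncard_cycleWalks_deleteEdges n
  have hG' := G'.sum_ncard_cycleWalks_deleteEdges n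
  rw [← Nat.card_congr σ] at hG'
  refine Nat.eq_of_mul_eq_mul_left (Nat.sub_pos_of_lt hn) ?_
  rw [Nat.sub_mul, Nat.sub_mul]
  omega

theorem ncard_cycleWalks_through_eq_of_edgeDeck [Finite V] [Finite W] {G : SimpleGraph V}
    {G' : SimpleGraph W} (σ : G.edgeSet ≃ G'.edgeSet)
    (hσ : ∀ f : G.edgeSet,
      Nonempty (G.deleteEdges {(f : Sym2 V)} ≃g G'.deleteEdges {(σ f : Sym2 W)}))
    (e : G.edgeSet) {n : ℕ} (hn : n < Nat.card G.edgeSet) :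
    {p ∈ G.cycleWalks n | ↑e ∈ p.2.edges}.ncard =
      {p ∈ G'.cycleWalks n | ↑(σ e) ∈ p.2.edges}.ncard := by
  have h := G.ncard_cycleWalks_through_add_avoiding e n
  have h' := G'.ncard_cycleWalks_through_add_avoiding (σ e) n
  rw [← ncard_cycleWalks_deleteEdges, ncard_cycleWalks_eq_of_iso (hσ e).some,
    ncard_cycleWalks_eq_of_edgeDeck σ hσ hn] at h
  rw [← ncard_cycleWalks_deleteEdges] at h'
  omega

theorem Walk.IsCycle.length_le_card [Fintype V] {G : SimpleGraph V} {v : V} {c : G.Walk v v}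
    (hc : c.IsCycle) : c.length ≤ Fintype.card V := by
  simpa using hc.support_nodup.length_le_card

theorem card_lt_card_edgeSet_of_two_le_degree [Fintype V] {G : SimpleGraph V} [DecidableRel G.Adj]
    (hdeg : ∀ v, 2 ≤ G.degree v) (hreg : ¬ G.IsRegularOfDegree 2) :
    Fintype.card V < Nat.card G.edgeSet := by
  obtain ⟨v, hv⟩ : ∃ v, G.degree v ≠ 2 := not_forall.mp hreg
  have : 2 * Fintype.card V < 2 * Nat.card G.edgeSet :=
    calc 2 * Fintype.card V = ∑ _v : V, 2 := by simp [mul_comm]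
      _ < ∑ v, G.degree v :=
        Finset.sum_lt_sum (fun v _ => hdeg v) ⟨v, Finset.mem_univ v, by have := hdeg v; omega⟩
      _ = 2 * Nat.card G.edgeSet := by
        rw [G.sum_degrees_eq_twice_card_edges, edgeFinset_card, Nat.card_eq_fintype_card]
  omega

theorem cycleWalks_eq_empty_of_card_edgeSet_le [Fintype V] {G : SimpleGraph V}
    [DecidableRel G.Adj] (hdeg : ∀ v, 2 ≤ G.degree v) (hreg : ¬ G.IsRegularOfDegree 2) {n : ℕ}
    (hn : Nat.card G.edgeSet ≤ n) : G.cycleWalks n = ∅ :=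
  Set.eq_empty_of_forall_notMem fun _ ⟨hcyc, hlen⟩ => by
    have := hcyc.length_le_card
    have := card_lt_card_edgeSet_of_two_le_degree hdeg hreg
    omega

theorem exists_isCycle_mem_edges_iff (G : SimpleGraph V) (e : Sym2 V) (n : ℕ) :
    (∃ (v : V) (c : G.Walk v v), c.IsCycle ∧ e ∈ c.edges ∧ c.length = n) ↔
      {p ∈ G.cycleWalks n | e ∈ p.2.edges}.Nonempty :=
  ⟨fun ⟨v, c, hc, he, hn⟩ => ⟨⟨v, c⟩, ⟨hc, hn⟩, he⟩,
    fun ⟨⟨v, c⟩, ⟨hc, hn⟩, he⟩ => ⟨v, c, hc, he, hn⟩⟩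

end SimpleGraph

open SimpleGraph in
theorem minimal_cycle_length_edge_reconstructible_general {V V' : Type*}
    [Fintype V] [Fintype V']
    (G : SimpleGraph V) (G' : SimpleGraph V')
    [DecidableRel G.Adj] [DecidableRel G'.Adj]
    (hconn : G.Connected) (hconn' : G'.Connected)
    (hdeg : ∀ v, 2 ≤ G.degree v) (hdeg' : ∀ v, 2 ≤ G'.degree v)
    (hnc : ¬ (G.Connected ∧ G.IsRegularOfDegree 2))
    (hnc' : ¬ (G'.Connected ∧ G'.IsRegularOfDegree 2))
    (σ : G.edgeSet ≃ G'.edgeSet)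
    (hdeck : ∀ f : G.edgeSet,
      Nonempty ((G.deleteEdges {(f : Sym2 V)}) ≃g (G'.deleteEdges {((σ f : Sym2 V'))})))
    (e : G.edgeSet) :
    sInf {n | ∃ (v : V) (c : G.Walk v v), c.IsCycle ∧ (e : Sym2 V) ∈ c.edges ∧ c.length = n} =
      sInf {n | ∃ (v' : V') (c : G'.Walk v' v'),
        c.IsCycle ∧ (σ e : Sym2 V') ∈ c.edges ∧ c.length = n} := by
  have hreg : ¬ G.IsRegularOfDegree 2 := fun h => hnc ⟨hconn, h⟩
  have hreg' : ¬ G'.IsRegularOfDegree 2 := fun h => hnc' ⟨hconn', h⟩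
  congr 1
  ext n
  simp only [Set.mem_ofPred_eq, exists_isCycle_mem_edges_iff]
  rcases lt_or_ge n (Nat.card G.edgeSet) with hn | hn
  · rw [← Set.ncard_pos ((G.finite_cycleWalks n).sep _),
      ← Set.ncard_pos ((G'.finite_cycleWalks n).sep _),
      ncard_cycleWalks_through_eq_of_edgeDeck σ hdeck e hn]
  · rw [cycleWalks_eq_empty_of_card_edgeSet_le hdeg hreg hn,
      cycleWalks_eq_empty_of_card_edgeSet_le hdeg' hreg' ((Nat.card_congr σ).symm.trans_le hn)]
    simp

/-- for two finite connected simple graphs of minimal degree at least 2,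
neither a cycle graph, all of whose edge-deleted subgraphs are connected, having the same
edge deck (witnessed by `σ`), the minimal length of a cycle through an edge `e` of `G`
equals the minimal length of a cycle through `σ e` in `G'`. -/
theorem minimal_cycle_length_edge_reconstructible {V V' : Type*}
    [Fintype V] [Fintype V'] [DecidableEq V] [DecidableEq V']
    (G : SimpleGraph V) (G' : SimpleGraph V')
    [DecidableRel G.Adj] [DecidableRel G'.Adj]
    (hconn : G.Connected) (hconn' : G'.Connected)
    (hdeg : ∀ v, 2 ≤ G.degree v) (hdeg' : ∀ v, 2 ≤ G'.degree v)
    (hnc : ¬ (G.Connected ∧ G.IsRegularOfDegree 2))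
    (hnc' : ¬ (G'.Connected ∧ G'.IsRegularOfDegree 2))
    (hbridgeless : ∀ f ∈ G.edgeSet, (G.deleteEdges {f}).Connected)
    (hbridgeless' : ∀ f' ∈ G'.edgeSet, (G'.deleteEdges {f'}).Connected)
    (σ : G.edgeSet ≃ G'.edgeSet)
    (hdeck : ∀ f : G.edgeSet,
      Nonempty ((G.deleteEdges {(f : Sym2 V)}) ≃g (G'.deleteEdges {((σ f : Sym2 V'))})))
    (e : G.edgeSet) :
    sInf {n | ∃ (v : V) (c : G.Walk v v), c.IsCycle ∧ (e : Sym2 V) ∈ c.edges ∧ c.length = n} =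
      sInf {n | ∃ (v' : V') (c : G'.Walk v' v'),
        c.IsCycle ∧ (σ e : Sym2 V') ∈ c.edges ∧ c.length = n} :=
  minimal_cycle_length_edge_reconstructible_general G G' hconn hconn' hdeg hdeg' hnc hnc' σ hdeck e
end

section
/- Let G be a finite connected simple graph with minimal degree at least 2 and no cut vertex, let e = {α, ω} be an edge of G such that H := G - e is connected, and let v be a vertex of H with degree at least 3 in H such that v ≠ α, v is adjacent to α in H, and α has degree at least 3 in H. Then there exist distinct edges e₁ and e_v of H such that α is an endpoint of e₁, v is an endpoint of e_v, the endpoint of e_v other than v is not equal to α, and the graph H - e₁ - e_v obtained by deleting both edges is connected (equivalently, H has a spanning tree containing neither e₁ nor e_v). -/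
/-- A cut vertex of a graph `G`: a vertex whose deletion (together with all incident
edges) yields a graph with more connected components than `G`. -/
def SimpleGraph.IsCutVertex {V : Type*} (G : SimpleGraph V) (v : V) : Prop :=
  Nat.card G.ConnectedComponent <
    Nat.card ((G.induce ({v}ᶜ : Set V)).ConnectedComponent)

instance {V : Type*} [DecidableEq V] (G : SimpleGraph V) [DecidableRel G.Adj]
    (s : Set (Sym2 V)) [DecidablePred (· ∈ s)] : DecidableRel (G.deleteEdges s).Adj := by
  intro a b
  simp only [SimpleGraph.deleteEdges_adj]
  infer_instance

/-- First-hit lemma: if there is a walk from `u` to `t` with `u ≠ t`, then there is a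
neighbor `y` of `t` such that `u` reaches `y` avoiding all edges incident to `t`. -/
private lemma firstHit {V : Type*} {P : SimpleGraph V} {t u : V}
    (w : P.Walk u t) :
    u ≠ t → ∃ y, P.Adj y t ∧ (P.deleteEdges {e | t ∈ e}).Reachable u y := by
  induction w with
  | nil => exact fun hu => absurd rfl hu
  | @cons u b c h p ih =>
    intro hu
    by_cases hb : b = c
    · exact ⟨u, hb ▸ h, SimpleGraph.Reachable.refl u⟩
    · obtain ⟨y, hy, hr⟩ := ih hb
      refine ⟨y, hy, SimpleGraph.Reachable.trans (SimpleGraph.Adj.reachable ?_) hr⟩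
      rw [SimpleGraph.deleteEdges_adj]
      refine ⟨h, ?_⟩
      simp only [Set.mem_setOf_eq, Sym2.mem_iff, not_or]
      exact ⟨fun h' => hu h'.symm, fun h' => hb h'.symm⟩

/-- Let `G` be a finite connected simple graph with minimal degree at least 2
and no cut vertex, `e = {α, ω}` an edge with `H := G - e` connected, and `v ≠ α` a vertex
of degree at least 3 in `H` that is adjacent to `α` in `H`, where `α` has degree at least 3
in `H`. Then there are distinct edges `e₁ = {α, a}` and `e_v = {c, v}` of `H` with `c ≠ α`,
such that `H - e₁ - e_v` is connected. -/
theorem exists_spanning_tree_avoiding_two_edges_adjacent_case {V : Type*}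
    [Fintype V] [DecidableEq V]
    (G : SimpleGraph V) [DecidableRel G.Adj]
    (hconn : G.Connected) (hdeg : ∀ u, 2 ≤ G.degree u)
    (hcut : ∀ u, ¬ G.IsCutVertex u)
    (α ω : V) (he : G.Adj α ω)
    (hHconn : (G.deleteEdges {s(α, ω)}).Connected)
    (v : V) (hv3 : 3 ≤ (G.deleteEdges {s(α, ω)}).degree v)
    (hvα : v ≠ α) (hvadj : (G.deleteEdges {s(α, ω)}).Adj v α)
    (hα3 : 3 ≤ (G.deleteEdges {s(α, ω)}).degree α) :
    ∃ a c : V,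
      (G.deleteEdges {s(α, ω)}).Adj α a ∧
      (G.deleteEdges {s(α, ω)}).Adj c v ∧
      c ≠ α ∧
      s(α, a) ≠ s(c, v) ∧
      ((G.deleteEdges {s(α, ω)}).deleteEdges {s(α, a), s(c, v)}).Connected := by
  classical
  set H := G.deleteEdges {s(α, ω)} with hHdef
  set K := G.deleteEdges {e : Sym2 V | α ∈ e} with hKdef
  have hKadj : ∀ {a b : V}, K.Adj a b → G.Adj a b ∧ a ≠ α ∧ b ≠ α := by
    intro a b hab
    rw [hKdef, SimpleGraph.deleteEdges_adj] at hab
    obtain ⟨h1, h2⟩ := hab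
    simp only [Set.mem_setOf_eq, Sym2.mem_iff, not_or] at h2
    exact ⟨h1, fun h => h2.1 h.symm, fun h => h2.2 h.symm⟩
  have hKH : ∀ {a b : V}, K.Adj a b → H.Adj a b := by
    intro a b hab
    obtain ⟨h1, h2, h3⟩ := hKadj hab
    rw [hHdef, SimpleGraph.deleteEdges_adj]
    refine ⟨h1, ?_⟩
    simp only [Set.mem_singleton_iff, Sym2.eq_iff, not_or]
    exact ⟨fun h => h2 h.1, fun h => h3 h.2⟩
  -- K-reachability between vertices different from α
  have hK1 : ∀ a b : V, a ≠ α → b ≠ α → K.Reachable a b := by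
    have hc1 : Nat.card G.ConnectedComponent = 1 := by
      rw [Nat.card_eq_one_iff_unique]
      refine ⟨⟨fun a b => ?_⟩, ⟨G.connectedComponentMk α⟩⟩
      refine SimpleGraph.ConnectedComponent.ind₂ (fun a b => ?_) a b
      exact SimpleGraph.ConnectedComponent.sound (hconn.preconnected a b)
    have hle := hcut α
    rw [SimpleGraph.IsCutVertex, not_lt, hc1] at hle
    haveI : Nonempty ((G.induce ({α}ᶜ : Set V)).ConnectedComponent) :=
      ⟨(G.induce ({α}ᶜ : Set V)).connectedComponentMk ⟨v, hvα⟩⟩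
    have hone : Nat.card ((G.induce ({α}ᶜ : Set V)).ConnectedComponent) = 1 :=
      le_antisymm hle Nat.card_pos
    haveI hsub : Subsingleton ((G.induce ({α}ᶜ : Set V)).ConnectedComponent) :=
      (Nat.card_eq_one_iff_unique.mp hone).1
    intro a b ha hb
    have heq := Subsingleton.elim ((G.induce ({α}ᶜ : Set V)).connectedComponentMk ⟨a, ha⟩)
      ((G.induce ({α}ᶜ : Set V)).connectedComponentMk ⟨b, hb⟩)
    have hr := SimpleGraph.ConnectedComponent.exact heq
    refine hr.map ⟨Subtype.val, ?_⟩
    intro p q hpq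
    rw [hKdef, SimpleGraph.deleteEdges_adj]
    refine ⟨hpq, ?_⟩
    simp only [Set.mem_setOf_eq, Sym2.mem_iff, not_or]
    exact ⟨fun h' => p.2 h'.symm, fun h' => q.2 h'.symm⟩
  -- pick two neighbors x ≠ x' of α, both different from v (and from α)
  have hvmem : v ∈ H.neighborFinset α := by
    rw [SimpleGraph.mem_neighborFinset]; exact hvadj.symm
  have hcard : 1 < ((H.neighborFinset α).erase v).card := by
    rw [Finset.card_erase_of_mem hvmem]
    have h3 : 3 ≤ (H.neighborFinset α).card := by
      rw [H.card_neighborFinset_eq_degree]; exact hα3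
    omega
  obtain ⟨x, hx, x', hx', hxx'⟩ := Finset.one_lt_card.mp hcard
  have hxv : x ≠ v := Finset.ne_of_mem_erase hx
  have hx'v : x' ≠ v := Finset.ne_of_mem_erase hx'
  have hxadj : H.Adj α x := (SimpleGraph.mem_neighborFinset _ _ _).mp (Finset.mem_of_mem_erase hx)
  have hx'adj : H.Adj α x' := (SimpleGraph.mem_neighborFinset _ _ _).mp (Finset.mem_of_mem_erase hx')
  have hxα : x ≠ α := hxadj.ne'
  have hx'α : x' ≠ α := hx'adj.ne'
  -- first hit of a K-walk from x to v
  obtain ⟨w⟩ := hK1 x v hxα hvα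
  obtain ⟨y, hyv, hry⟩ := firstHit w hxv
  obtain ⟨hyvG, hyα, -⟩ := hKadj hyv
  set H₂ := H.deleteEdges {s(α, x'), s(y, v)} with hH2def
  have hH2adj : ∀ {a b : V}, H.Adj a b → s(a, b) ≠ s(α, x') → s(a, b) ≠ s(y, v) → H₂.Adj a b := by
    intro a b h1 h2 h3
    rw [hH2def, SimpleGraph.deleteEdges_adj]
    refine ⟨h1, ?_⟩
    simp only [Set.mem_insert_iff, Set.mem_singleton_iff, not_or]
    exact ⟨h2, h3⟩
  have hKvH2 : K.deleteEdges {e : Sym2 V | v ∈ e} ≤ H₂ := by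
    intro a b hab
    rw [SimpleGraph.deleteEdges_adj] at hab
    obtain ⟨hab, hv⟩ := hab
    simp only [Set.mem_setOf_eq, Sym2.mem_iff, not_or] at hv
    obtain ⟨-, haα, hbα⟩ := hKadj hab
    refine hH2adj (hKH hab) ?_ ?_
    · intro h; rw [Sym2.eq_iff] at h
      rcases h with ⟨h1, -⟩ | ⟨-, h2⟩
      · exact haα h1
      · exact hbα h2
    · intro h; rw [Sym2.eq_iff] at h
      rcases h with ⟨-, h2⟩ | ⟨h1, -⟩
      · exact hv.2 h2.symm
      · exact hv.1 h1.symm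
  -- key edges of H₂
  have hav : H₂.Adj α v := by
    refine hH2adj hvadj.symm ?_ ?_
    · intro h; rw [Sym2.eq_iff] at h
      rcases h with ⟨-, h2⟩ | ⟨-, h2⟩
      · exact hx'v h2.symm
      · exact hvα h2
    · intro h; rw [Sym2.eq_iff] at h
      rcases h with ⟨h1, -⟩ | ⟨h1, -⟩
      · exact hyα h1.symm
      · exact hvα h1.symm
  have hax : H₂.Adj α x := by
    refine hH2adj hxadj ?_ ?_
    · intro h; rw [Sym2.eq_iff] at h
      rcases h with ⟨-, h2⟩ | ⟨-, h2⟩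
      · exact hxx' h2
      · exact hxα h2
    · intro h; rw [Sym2.eq_iff] at h
      rcases h with ⟨h1, -⟩ | ⟨h1, -⟩
      · exact hyα h1.symm
      · exact hvα h1.symm
  -- y reaches α in H₂
  have hyx : H₂.Reachable y x := (hry.mono hKvH2).symm
  have hyα2 : H₂.Reachable y α := hyx.trans hax.symm.reachable
  -- every vertex reaches α in H₂
  have hreach : ∀ u : V, H₂.Reachable u α := by
    intro u
    by_cases hu : u = α
    · subst hu; exact SimpleGraph.Reachable.refl _
    by_cases huv : u = v
    · subst huv; exact hav.symm.reachable
    obtain ⟨w'⟩ := hK1 u v hu hvα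
    obtain ⟨y', hy'v, hry'⟩ := firstHit w' huv
    obtain ⟨-, hy'α, -⟩ := hKadj hy'v
    have huy' : H₂.Reachable u y' := hry'.mono hKvH2
    by_cases hyy' : y' = y
    · exact huy'.trans (hyy' ▸ hyα2)
    · have : H₂.Adj y' v := by
        refine hH2adj (hKH hy'v) ?_ ?_
        · intro h; rw [Sym2.eq_iff] at h
          rcases h with ⟨h1, -⟩ | ⟨-, h2⟩
          · exact hy'α h1
          · exact hvα h2
        · intro h; rw [Sym2.eq_iff] at h
          rcases h with ⟨h1, -⟩ | ⟨h1, -⟩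
          · exact hyy' h1
          · exact (hKH hy'v).ne h1
      exact (huy'.trans this.reachable).trans hav.symm.reachable
  refine ⟨x', y, hx'adj, hKH hyv, hyα, ?_, ?_⟩
  · intro h; rw [Sym2.eq_iff] at h
    rcases h with ⟨h1, -⟩ | ⟨h1, -⟩
    · exact hyα h1.symm
    · exact hvα h1.symm
  · haveI : Nonempty V := ⟨α⟩
    exact ⟨fun a b => (hreach a).trans (hreach b).symm⟩
end

section
/- Let G be a finite connected simple graph with minimal degree at least 2 whose first Betti number b = |E(G)| - |V(G)| + 1 satisfies b ≥ 2. Then the edge adjacency matrix T of G is irreducible: for any two oriented edges d and f of G there exists an integer n ≥ 1 such that the (d, f) entry of Tⁿ is positive. -/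
/-- The type of oriented edges of a simple graph `G`: ordered pairs of adjacent vertices. -/
def SimpleGraph.orientedEdge {V : Type*} (G : SimpleGraph V) : Type _ :=
  {p : V × V // G.Adj p.1 p.2}

instance {V : Type*} [Fintype V] (G : SimpleGraph V) [DecidableRel G.Adj] :
    Fintype G.orientedEdge :=
  Subtype.fintype fun p : V × V => G.Adj p.1 p.2

instance {V : Type*} [DecidableEq V] (G : SimpleGraph V) : DecidableEq G.orientedEdge :=
  fun d f => decidable_of_iff (d.val = f.val) Subtype.ext_iff.symm

/-- The edge adjacency matrix of `G`: rows and columns are indexed by oriented edges;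
the `(d, f)` entry is `1` if the terminus of `d` is the origin of `f` and `f` is not the
inverse of `d`, and `0` otherwise. -/
def SimpleGraph.edgeAdjMatrix {V : Type*} [DecidableEq V] (G : SimpleGraph V) :
    Matrix G.orientedEdge G.orientedEdge ℝ :=
  fun d f => if d.val.2 = f.val.1 ∧ f.val ≠ (d.val.2, d.val.1) then 1 else 0

/-!
The entry `T d f` is positive exactly when `f` continues `d` without backtracking, so it suffices
to show that such steps connect any two oriented edges. Minimal degree `2` gives every oriented
edge a successor, so there is an essential class `K` of oriented edges, and each edge of `K` also
has a predecessor in `K`. Then every vertex is the terminus of an edge of `K`, so every oriented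
edge outside `K` is the reverse of one in `K`. If some edge of `K` has its reverse in `K`,
reversing paths makes `K` closed under reversal, so `K` contains everything. Otherwise the
terminus map is injective on `K` (two edges of `K` with the same terminus would let one step
into the reverse of the other), whence `2|E| ≤ 2|K| ≤ 2|V|`, contradicting `b ≥ 2`.
-/

open Finset Relation

namespace Relation

variable {α : Type*}

/-- An essential index in the sense of Seneta, *Non-negative Matrices and Markov Chains*. -/
def IsEssential (r : α → α → Prop) (m : α) : Prop :=
  ∀ x, ReflTransGen r m x → ReflTransGen r x m

theorem exists_isEssential [Finite α] [Nonempty α] (r : α → α → Prop) :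
    ∃ m, IsEssential r m := by
  obtain ⟨m, hm⟩ := Finite.exists_min fun a => {x | ReflTransGen r a x}.ncard
  refine ⟨m, fun x hx => ?_⟩
  have hsub : {y | ReflTransGen r x y} ⊆ {y | ReflTransGen r m y} := fun _ hy => hx.trans hy
  have heq : {y | ReflTransGen r x y} = {y | ReflTransGen r m y} :=
    Set.eq_of_subset_of_ncard_le hsub (hm x)
  exact (Set.ext_iff.mp heq m).mpr ReflTransGen.refl

theorem IsEssential.exists_predecessor {r : α → α → Prop} {m x : α} (hm : IsEssential r m)
    (hsucc : ∀ x, ∃ y, r x y) (hx : ReflTransGen r m x) :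
    ∃ z, ReflTransGen r m z ∧ r z x := by
  obtain ⟨y, hxy⟩ := hsucc x
  have hcycle : TransGen r x x := TransGen.head' hxy ((hm y (hx.tail hxy)).trans hx)
  obtain ⟨z, hxz, hzx⟩ := TransGen.tail'_iff.mp hcycle
  exact ⟨z, hx.trans hxz, hzx⟩

end Relation

namespace Matrix

variable {n R : Type*} [Fintype n] [DecidableEq n] [Semiring R] [PartialOrder R]
  [IsOrderedRing R] [PosMulStrictMono R]

theorem exists_pow_apply_pos_of_transGen {A : Matrix n n R} (hA : ∀ i j, 0 ≤ A i j) {i j : n}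
    (h : TransGen (fun i j => 0 < A i j) i j) : ∃ k > 0, 0 < (A ^ k) i j := by
  induction h with
  | single h => exact ⟨1, one_pos, by rwa [pow_one]⟩
  | @tail l j _ hlj ih =>
    obtain ⟨k, -, hil⟩ := ih
    refine ⟨k + 1, k.succ_pos, ?_⟩
    rw [pow_succ, mul_apply]
    exact (mul_pos hil hlj).trans_le <| Finset.single_le_sum
      (fun l _ => mul_nonneg (pow_apply_nonneg hA k i l) (hA l j)) (mem_univ l)

end Matrix

namespace SimpleGraph

variable {V : Type*} {G : SimpleGraph V}

theorem Preconnected.eq_univ_of_adj_closed (hG : G.Preconnected) {S : Set V}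
    (hS : ∀ u v, G.Adj u v → u ∈ S → v ∈ S) (hne : S.Nonempty) : S = Set.univ := by
  obtain ⟨u, hu⟩ := hne
  refine Set.eq_univ_of_forall fun v => ?_
  induction (reachable_iff_reflTransGen u v).mp (hG u v) with
  | refl => exact hu
  | tail _ hvw ih => exact hS _ _ hvw ih

def orientedEdge.rev (e : G.orientedEdge) : G.orientedEdge :=
  ⟨(e.val.2, e.val.1), e.prop.symm⟩

@[simp]
theorem orientedEdge.rev_rev (e : G.orientedEdge) : e.rev.rev = e := rfl

variable (G) in
def NonbacktrackingAdj (d f : G.orientedEdge) : Prop :=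
  d.val.2 = f.val.1 ∧ f.val.2 ≠ d.val.1

theorem NonbacktrackingAdj.rev {d f : G.orientedEdge} (h : G.NonbacktrackingAdj d f) :
    G.NonbacktrackingAdj f.rev d.rev :=
  ⟨h.1.symm, fun h' => h.2 h'.symm⟩

theorem reflTransGen_nonbacktrackingAdj_rev {d f : G.orientedEdge}
    (h : ReflTransGen G.NonbacktrackingAdj d f) :
    ReflTransGen G.NonbacktrackingAdj f.rev d.rev := by
  induction h with
  | refl => exact .refl
  | tail _ hef ih => exact ReflTransGen.head hef.rev ih

theorem exists_nonbacktrackingAdj [G.LocallyFinite] (hdeg : ∀ v, 2 ≤ G.degree v)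
    (e : G.orientedEdge) : ∃ f, G.NonbacktrackingAdj e f := by
  have hcard : 1 < (G.neighborFinset e.val.2).card := by
    rw [card_neighborFinset_eq_degree]
    exact hdeg _
  obtain ⟨w, hw, hne⟩ := exists_mem_ne hcard e.val.1
  exact ⟨⟨(e.val.2, w), (mem_neighborFinset G _ w).mp hw⟩, rfl, hne⟩

theorem NonbacktrackingAdj.edgeAdjMatrix_pos [DecidableEq V] {d f : G.orientedEdge}
    (h : G.NonbacktrackingAdj d f) : 0 < G.edgeAdjMatrix d f := by
  have hf : f.val ≠ (d.val.2, d.val.1) := fun hf => h.2 (congrArg Prod.snd hf)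
  simp only [edgeAdjMatrix, if_pos (And.intro h.1 hf), zero_lt_one]

theorem edgeAdjMatrix_nonneg [DecidableEq V] (d f : G.orientedEdge) :
    0 ≤ G.edgeAdjMatrix d f := by
  unfold edgeAdjMatrix
  split_ifs <;> norm_num

theorem card_orientedEdge [Fintype V] [DecidableRel G.Adj] :
    Fintype.card G.orientedEdge = 2 * #G.edgeFinset := by
  rw [← dart_card_eq_twice_card_edges]
  exact Fintype.card_congr
    { toFun := fun e => ⟨e.val, e.prop⟩
      invFun := fun d => ⟨d.toProd, d.adj⟩
      left_inv := fun _ => rfl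
      right_inv := fun _ => rfl }

section ClosedSet

variable {S : Set G.orientedEdge}
  (hfwd : ∀ d f, d ∈ S → G.NonbacktrackingAdj d f → f ∈ S)

include hfwd

theorem exists_mem_snd_eq (hG : G.Preconnected)
    (hpred : ∀ f ∈ S, ∃ d ∈ S, G.NonbacktrackingAdj d f) (hne : S.Nonempty) (v : V) :
    ∃ e ∈ S, e.val.2 = v := by
  have hT : {v | ∃ e ∈ S, e.val.2 = v} = Set.univ := by
    refine hG.eq_univ_of_adj_closed ?_ (hne.image _)
    rintro u w huw ⟨e, he, rfl⟩
    by_cases hw : w = e.val.1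
    · obtain ⟨d, hd, hde⟩ := hpred e he
      exact ⟨d, hd, hde.1.trans hw.symm⟩
    · exact ⟨⟨(e.val.2, w), huw⟩, hfwd _ _ he ⟨rfl, hw⟩, rfl⟩
  exact Set.eq_univ_iff_forall.mp hT v

theorem mem_or_rev_mem (hG : G.Preconnected)
    (hpred : ∀ f ∈ S, ∃ d ∈ S, G.NonbacktrackingAdj d f) (hne : S.Nonempty)
    (x : G.orientedEdge) : x ∈ S ∨ x.rev ∈ S := by
  obtain ⟨e, he, hex⟩ := exists_mem_snd_eq hfwd hG hpred hne x.val.1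
  by_cases hx : x.val.2 = e.val.1
  · right
    convert he
    exact Subtype.ext (Prod.ext hx hex.symm)
  · exact .inl (hfwd _ _ he ⟨hex, hx⟩)

theorem snd_injOn (hrev : ∀ e ∈ S, e.rev ∉ S) : Set.InjOn (fun e => e.val.2) S := by
  intro x hx y hy hxy
  by_contra hne
  have hfst : y.val.1 ≠ x.val.1 := fun h => hne (Subtype.ext (Prod.ext h.symm hxy))
  exact hrev y hy (hfwd x y.rev hx ⟨hxy, hfst⟩)

theorem card_edgeFinset_le_of_forall_rev_notMem [Fintype V] [DecidableRel G.Adj]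
    (hG : G.Preconnected) (hpred : ∀ f ∈ S, ∃ d ∈ S, G.NonbacktrackingAdj d f)
    (hne : S.Nonempty) (hrev : ∀ e ∈ S, e.rev ∉ S) : #G.edgeFinset ≤ Fintype.card V := by
  have hcompl : Sᶜ ⊆ orientedEdge.rev '' S := fun x hx =>
    ⟨x.rev, (mem_or_rev_mem hfwd hG hpred hne x).resolve_left hx, x.rev_rev⟩
  have hS : S.ncard ≤ Fintype.card V := by
    rw [← (snd_injOn hfwd hrev).ncard_image, ← Nat.card_eq_fintype_card]
    exact Set.ncard_le_card _
  have hSc : Sᶜ.ncard ≤ S.ncard := (Set.ncard_le_ncard hcompl).trans (Set.ncard_image_le)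
  have hall : 2 * #G.edgeFinset = S.ncard + Sᶜ.ncard := by
    rw [← card_orientedEdge, Set.ncard_add_ncard_compl, Nat.card_eq_fintype_card]
  omega

end ClosedSet

theorem transGen_nonbacktrackingAdj [Fintype V] [DecidableRel G.Adj] (hG : G.Preconnected)
    (hdeg : ∀ v, 2 ≤ G.degree v) (hcard : Fintype.card V < #G.edgeFinset)
    (d f : G.orientedEdge) : TransGen G.NonbacktrackingAdj d f := by
  have : Nonempty G.orientedEdge := ⟨d⟩
  obtain ⟨m, hm⟩ := exists_isEssential G.NonbacktrackingAdj
  set K := {x | ReflTransGen G.NonbacktrackingAdj m x}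
  have hfwd : ∀ x y, x ∈ K → G.NonbacktrackingAdj x y → y ∈ K := fun _ _ hx hxy => hx.tail hxy
  have hpred : ∀ y ∈ K, ∃ x ∈ K, G.NonbacktrackingAdj x y := fun _ hy =>
    hm.exists_predecessor (exists_nonbacktrackingAdj hdeg) hy
  have hne : K.Nonempty := ⟨m, .refl⟩
  obtain ⟨e, he, he'⟩ : ∃ e ∈ K, e.rev ∈ K := by
    by_contra! h
    exact hcard.not_ge (card_edgeFinset_le_of_forall_rev_notMem hfwd hG hpred hne h)
  have hrev : ∀ x ∈ K, x.rev ∈ K := fun x hx =>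
    he'.trans (reflTransGen_nonbacktrackingAdj_rev ((hm x hx).trans he))
  have hK : ∀ x, x ∈ K := fun x =>
    (mem_or_rev_mem hfwd hG hpred hne x).elim id fun h => x.rev_rev ▸ hrev _ h
  obtain ⟨g, hdg⟩ := exists_nonbacktrackingAdj hdeg d
  exact TransGen.head' hdg ((hm g (hK g)).trans (hK f))

end SimpleGraph

/-- if `G` is a finite connected simple graph of minimal degree at least 2
with first Betti number `b = |E| - |V| + 1 ≥ 2`, then the edge adjacency matrix of `G` is
irreducible: for any oriented edges `d, f` some power `Tⁿ` (`n ≥ 1`) has positive `(d, f)`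
entry. -/
theorem edgeAdjMatrix_irreducible {V : Type*} [Fintype V] [DecidableEq V]
    (G : SimpleGraph V) [DecidableRel G.Adj]
    (hconn : G.Connected) (hdeg : ∀ v, 2 ≤ G.degree v)
    (hb : 2 ≤ G.edgeFinset.card - Fintype.card V + 1) :
    ∀ d f : G.orientedEdge, ∃ n : ℕ, 1 ≤ n ∧ 0 < (G.edgeAdjMatrix ^ n) d f := by
  intro d f
  have hcard : Fintype.card V < #G.edgeFinset := by omega
  have hsteps := SimpleGraph.transGen_nonbacktrackingAdj hconn.preconnected hdeg hcard d f
  exact Matrix.exists_pow_apply_pos_of_transGen SimpleGraph.edgeAdjMatrix_nonneg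
    (TransGen.mono (fun _ _ h => h.edgeAdjMatrix_pos) d f hsteps)
end
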